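/- arXiv:2411.06964 — 11 statements merged into one kernel-verified Lean document; each statement's English description precedes it below -/
import Mathlib

section
/- Every nonzero idempotent element of the algebra A is conjugate, by an invertible element of UT_3(K), to a diagonal matrix in A (namely to e_{22}, to e_{11}+e_{33}, or to the identity matrix). -/
set_option maxHeartbeats 1000000

/-- Every nonzero idempotent of the subalgebra
`A = K(e₁₁+e₃₃) ⊕ Ke₂₂ ⊕ Ke₁₂ ⊕ Ke₂₃ ⊕ Ke₁₃` of `UT₃(K)` is conjugate, by an
invertible upper triangular matrix, to `e₂₂`, to `e₁₁+e₃₃`, or to the identity. -/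
theorem stmt_0 (K : Type*) [Field K] (d a c g b : K)
    (e : Matrix (Fin 3) (Fin 3) K)
    (he : e = !![d, a, c; 0, g, b; 0, 0, d])
    (hidem : e * e = e) (hne : e ≠ 0) :
    ∃ P Q : Matrix (Fin 3) (Fin 3) K,
      P * Q = 1 ∧ Q * P = 1 ∧ P.BlockTriangular id ∧
      P * e * Q ∈ ({!![0,0,0;0,1,0;0,0,0], !![1,0,0;0,0,0;0,0,1], (1 : Matrix (Fin 3) (Fin 3) K)} :
        Set (Matrix (Fin 3) (Fin 3) K)) := by
  subst he
  have key : ∀ i j, (!![d, a, c; 0, g, b; 0, 0, d] * !![d, a, c; 0, g, b; 0, 0, d]) i j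
      = !![d, a, c; 0, g, b; 0, 0, d] i j := fun i j => congrFun (congrFun hidem i) j
  have h00 : d * d = d := by
    simpa [Matrix.mul_apply, Fin.sum_univ_three, Matrix.vecHead, Matrix.vecTail] using key 0 0
  have h11 : g * g = g := by
    simpa [Matrix.mul_apply, Fin.sum_univ_three, Matrix.vecHead, Matrix.vecTail] using key 1 1
  have h01 : d * a + a * g = a := by
    simpa [Matrix.mul_apply, Fin.sum_univ_three, Matrix.vecHead, Matrix.vecTail] using key 0 1
  have h12 : g * b + b * d = b := by
    simpa [Matrix.mul_apply, Fin.sum_univ_three, Matrix.vecHead, Matrix.vecTail] using key 1 2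
  have h02 : d * c + a * b + c * d = c := by
    simpa [Matrix.mul_apply, Fin.sum_univ_three, Matrix.vecHead, Matrix.vecTail] using key 0 2
  have hd : d = 0 ∨ d = 1 := by
    have h : d * (d - 1) = 0 := by linear_combination h00
    rcases mul_eq_zero.mp h with h | h
    · exact Or.inl h
    · exact Or.inr (by linear_combination h)
  have hg : g = 0 ∨ g = 1 := by
    have h : g * (g - 1) = 0 := by linear_combination h11
    rcases mul_eq_zero.mp h with h | h
    · exact Or.inl h
    · exact Or.inr (by linear_combination h)
  rcases hd with hd | hd <;> rcases hg with hg | hg <;> subst hd <;> subst hg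
  · -- d = 0, g = 0 : e = 0, contradiction
    exfalso
    have ha : a = 0 := by linear_combination -h01
    have hb : b = 0 := by linear_combination -h12
    have hc : c = 0 := by
      have h : a * b = c := by linear_combination h02
      rw [ha, zero_mul] at h; exact h.symm
    subst ha; subst hb; subst hc
    apply hne
    ext i j
    fin_cases i <;> fin_cases j <;>
      simp [Matrix.vecHead, Matrix.vecTail]
  · -- d = 0, g = 1 : conjugate to e₂₂
    have hc : c = a * b := by linear_combination -h02
    subst hc
    refine ⟨!![1,-a,0;0,1,b;0,0,1], !![1,a,-(a*b);0,1,-b;0,0,1], ?_, ?_, ?_, ?_⟩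
    · ext i j; fin_cases i <;> fin_cases j <;>
        simp [Matrix.mul_apply, Fin.sum_univ_three, Matrix.one_apply,
          Matrix.vecHead, Matrix.vecTail] <;> ring
    · ext i j; fin_cases i <;> fin_cases j <;>
        simp [Matrix.mul_apply, Fin.sum_univ_three, Matrix.one_apply,
          Matrix.vecHead, Matrix.vecTail] <;> ring
    · intro i j hij; fin_cases i <;> fin_cases j <;>
        simp_all [Matrix.vecHead, Matrix.vecTail]
    · left
      ext i j; fin_cases i <;> fin_cases j <;>
        simp [Matrix.mul_apply, Fin.sum_univ_three,
          Matrix.vecHead, Matrix.vecTail] <;> ring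
  · -- d = 1, g = 0 : conjugate to e₁₁ + e₃₃
    have hc : c = -(a * b) := by linear_combination h02
    subst hc
    refine ⟨!![1,a,0;0,1,-b;0,0,1], !![1,-a,-(a*b);0,1,b;0,0,1], ?_, ?_, ?_, ?_⟩
    · ext i j; fin_cases i <;> fin_cases j <;>
        simp [Matrix.mul_apply, Fin.sum_univ_three, Matrix.one_apply,
          Matrix.vecHead, Matrix.vecTail] <;> ring
    · ext i j; fin_cases i <;> fin_cases j <;>
        simp [Matrix.mul_apply, Fin.sum_univ_three, Matrix.one_apply,
          Matrix.vecHead, Matrix.vecTail] <;> ring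
    · intro i j hij; fin_cases i <;> fin_cases j <;>
        simp_all [Matrix.vecHead, Matrix.vecTail]
    · right; left
      ext i j; fin_cases i <;> fin_cases j <;>
        simp [Matrix.mul_apply, Fin.sum_univ_three,
          Matrix.vecHead, Matrix.vecTail] <;> ring
  · -- d = 1, g = 1 : e = 1
    have ha : a = 0 := by linear_combination h01
    have hb : b = 0 := by linear_combination h12
    subst ha; subst hb
    have hc : c = 0 := by linear_combination h02
    subst hc
    refine ⟨1, 1, by simp, by simp, ?_, ?_⟩
    · intro i j hij
      exact Matrix.one_apply_ne (Fin.ne_of_lt hij).symm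
    · right; right
      rw [Matrix.one_mul, Matrix.mul_one, Matrix.one_fin_three]
      exact rfl
end

section
/- Every homogeneous element of A (with respect to any grading by an abelian group G such that the identity component contains only multiples of the identity modulo the radical) is either nilpotent or invertible. More precisely: if a ∈ A is a non-nilpotent element of a homogeneous component A_g in a G-grading of A where A_{1_G}/J(A_{1_G}) ≅ K·E, then a is invertible. -/
/-!
If `a ∈ A_g` is not nilpotent, its powers `a ^ k ∈ A_{g ^ k}` are nonzero; as the components are
independent and `A` is finite-dimensional, `g` has finite order `n`. Then `a ^ n ∈ A_1`, so
`a ^ n - λ` is nilpotent for some scalar `λ`. The elements of `A` are upper triangular, so every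
diagonal entry `x` of `a` satisfies `x ^ n = λ`; since `a` is not nilpotent, one of them, hence `λ`,
hence all of them are nonzero. Thus `det a ≠ 0`, and `a⁻¹`, a polynomial in `a` by Cayley–Hamilton,
lies in `A`.
-/

/-- The subalgebra `A` of `UT₃(K)` spanned by `e₁₁+e₃₃, e₂₂, e₁₂, e₂₃, e₁₃`,
as a submodule of the 3×3 matrices. -/
def matAlgA (K : Type*) [Field K] : Submodule K (Matrix (Fin 3) (Fin 3) K) :=
  Submodule.span K
    {!![1,0,0;0,0,0;0,0,1], !![0,0,0;0,1,0;0,0,0], !![0,1,0;0,0,0;0,0,0],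
     !![0,0,0;0,0,1;0,0,0], !![0,0,1;0,0,0;0,0,0]}

open Polynomial

namespace Matrix

section UpperTriangular

variable {n R : Type*} [Fintype n] [LinearOrder n]

theorem IsUpperTriangular.mul_apply_self [NonUnitalNonAssocSemiring R] {M N : Matrix n n R}
    (hM : M.IsUpperTriangular) (hN : N.IsUpperTriangular) (i : n) :
    (M * N) i i = M i i * N i i := by
  rw [mul_apply]
  refine Finset.sum_eq_single i (fun j _ hji => ?_) (by simp)
  rcases hji.lt_or_gt with hj | hj
  · exact mul_eq_zero_of_left (hM hj) _
  · exact mul_eq_zero_of_right _ (hN hj)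

theorem IsUpperTriangular.pow_apply_self [DecidableEq n] [Semiring R] {M : Matrix n n R}
    (hM : M.IsUpperTriangular) (k : ℕ) (i : n) : (M ^ k) i i = M i i ^ k := by
  induction k with
  | zero => simp
  | succ k ih => rw [pow_succ, IsUpperTriangular.mul_apply_self (hM.pow k) hM, ih, pow_succ]

theorem IsUpperTriangular.isNilpotent_iff [DecidableEq n] [CommRing R] [IsReduced R]
    {M : Matrix n n R} (hM : M.IsUpperTriangular) : IsNilpotent M ↔ ∀ i, M i i = 0 := by
  constructor
  · rintro ⟨k, hk⟩ i
    exact IsNilpotent.eq_zero ⟨k, by rw [← hM.pow_apply_self, hk, zero_apply]⟩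
  · intro hdiag
    refine ⟨Fintype.card n, ?_⟩
    have hchar : M.charpoly = X ^ Fintype.card n := by
      simp [charpoly_of_isUpperTriangular M hM, hdiag]
    simpa [hchar] using aeval_self_charpoly M

theorem IsUpperTriangular.isUnit_det_of_isNilpotent_pow_sub [DecidableEq n] [Field R]
    {M : Matrix n n R} (hM : M.IsUpperTriangular) (hnil : ¬IsNilpotent M) {k : ℕ} (hk : k ≠ 0)
    {c : R} (hc : IsNilpotent (M ^ k - c • 1)) : IsUnit M.det := by
  have hpow : ∀ i, M i i ^ k = c := fun i => by
    have hsub : (M ^ k - c • 1).IsUpperTriangular :=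
      (hM.pow k).sub (by rw [smul_one_eq_diagonal]; exact blockTriangular_diagonal _)
    simpa [sub_eq_zero, hM.pow_apply_self] using (hsub.isNilpotent_iff.mp hc) i
  obtain ⟨i, hi⟩ : ∃ i, M i i ≠ 0 := by
    simpa using mt hM.isNilpotent_iff.mpr hnil
  have hc0 : c ≠ 0 := hpow i ▸ pow_ne_zero k hi
  rw [det_of_isUpperTriangular hM, isUnit_iff_ne_zero, Finset.prod_ne_zero_iff]
  exact fun j _ hj => hc0 (by rw [← hpow j, hj, zero_pow hk])

end UpperTriangular

theorem nonsing_inv_mem_subalgebra {n R : Type*} [Fintype n] [DecidableEq n] [CommRing R]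
    (S : Subalgebra R (Matrix n n R)) {M : Matrix n n R} (hM : M ∈ S) : M⁻¹ ∈ S := by
  by_cases hdet : IsUnit M.det
  swap
  · rw [nonsing_inv_apply_not_isUnit M hdet]
    exact S.zero_mem
  have hp0 : IsUnit (M.charpoly.coeff 0) :=
    isUnit_of_mul_isUnit_right (det_eq_sign_charpoly_coeff M ▸ hdet)
  -- Cayley–Hamilton, with the charpoly split as `p = p.divX * X + C (p.coeff 0)`
  have hCH : aeval M M.charpoly.divX * M = -algebraMap R _ (M.charpoly.coeff 0) := by
    have := aeval_self_charpoly M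
    rw [← divX_mul_X_add M.charpoly, map_add, map_mul, aeval_X, aeval_C] at this
    exact eq_neg_of_add_eq_zero_left this
  have hq : aeval M M.charpoly.divX ∈ S := by
    simpa [Subalgebra.aeval_coe] using (aeval (⟨M, hM⟩ : S) M.charpoly.divX).2
  rw [inv_eq_left_inv (B := -(↑hp0.unit⁻¹ : R) • aeval M M.charpoly.divX)]
  · exact S.smul_mem hq _
  · rw [smul_mul_assoc, hCH, Algebra.algebraMap_eq_smul_one, neg_smul_neg, smul_smul,
      Units.inv_mul_of_eq hp0.unit_spec, one_smul]

end Matrix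

open Matrix

def matAlgASubalgebra (K : Type*) [Field K] : Subalgebra K (Matrix (Fin 3) (Fin 3) K) where
  carrier := {M | M.IsUpperTriangular ∧ M 2 2 = M 0 0}
  mul_mem' := fun ⟨hM, hM₂⟩ ⟨hN, hN₂⟩ =>
    ⟨hM.mul hN, by rw [hM.mul_apply_self hN, hM.mul_apply_self hN, hM₂, hN₂]⟩
  add_mem' := fun ⟨hM, hM₂⟩ ⟨hN, hN₂⟩ => ⟨hM.add hN, by simp [hM₂, hN₂]⟩
  algebraMap_mem' c := ⟨blockTriangular_algebraMap c, by simp [algebraMap_matrix_apply]⟩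

theorem matAlgASubalgebra_toSubmodule (K : Type*) [Field K] :
    Subalgebra.toSubmodule (matAlgASubalgebra K) = matAlgA K := by
  refine le_antisymm ?_ (Submodule.span_le.mpr ?_)
  · rintro M ⟨hM, hM₂⟩
    have hdecomp : M = M 0 0 • !![1,0,0;0,0,0;0,0,1] + M 1 1 • !![0,0,0;0,1,0;0,0,0]
        + M 0 1 • !![0,1,0;0,0,0;0,0,0] + M 1 2 • !![0,0,0;0,0,1;0,0,0]
        + M 0 2 • !![0,0,1;0,0,0;0,0,0] := by
      ext i j
      fin_cases i <;> fin_cases j <;> simp [hM₂, hM (show (0 : Fin 3) < 1 by decide),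
        hM (show (0 : Fin 3) < 2 by decide), hM (show (1 : Fin 3) < 2 by decide)]
    rw [hdecomp]
    refine add_mem (add_mem (add_mem (add_mem ?_ ?_) ?_) ?_) ?_ <;>
      exact Submodule.smul_mem _ _ (Submodule.subset_span (by simp))
  · simp only [Set.insert_subset_iff, Set.singleton_subset_iff]
    refine ⟨?_, ?_, ?_, ?_, ?_⟩ <;>
      exact ⟨fun i j (hij : j < i) => by fin_cases i <;> fin_cases j <;> simp_all, rfl⟩

theorem pow_mem_graded {G R M : Type*} [Monoid G] [Semiring R] [Semiring M] [Module R M]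
    (𝒜 : G → Submodule R M)
    (hmul : ∀ g h : G, ∀ x y : M, x ∈ 𝒜 g → y ∈ 𝒜 h → x * y ∈ 𝒜 (g * h))
    (hone : (1 : M) ∈ 𝒜 1) {g : G} {a : M} (ha : a ∈ 𝒜 g) (k : ℕ) : a ^ k ∈ 𝒜 (g ^ k) := by
  induction k with
  | zero => simpa using hone
  | succ k ih => simpa [pow_succ] using hmul _ _ _ _ ih ha

theorem isOfFinOrder_of_mem_of_not_isNilpotent {G K M : Type*} [LeftCancelMonoid G] [Field K]
    [Ring M] [Module K M] [FiniteDimensional K M] (𝒜 : G → Submodule K M) (hind : iSupIndep 𝒜)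
    (hmul : ∀ g h : G, ∀ x y : M, x ∈ 𝒜 g → y ∈ 𝒜 h → x * y ∈ 𝒜 (g * h))
    (hone : (1 : M) ∈ 𝒜 1) {g : G} {a : M} (ha : a ∈ 𝒜 g) (hnil : ¬IsNilpotent a) :
    IsOfFinOrder g := by
  by_contra hfin
  refine Module.Finite.not_linearIndependent_of_infinite (R := K) (fun k : ℕ => a ^ k) ?_
  exact (hind.comp (injective_pow_iff_not_isOfFinOrder.mpr hfin)).linearIndependent _
    (pow_mem_graded 𝒜 hmul hone ha) fun k hk => hnil ⟨k, hk⟩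

theorem stmt_2_general (K : Type*) [Field K] (G : Type*) [CommGroup G]
    (𝒜 : G → Submodule K (Matrix (Fin 3) (Fin 3) K))
    (hle : ∀ g, 𝒜 g ≤ matAlgA K)
    (hind : ∀ g, Disjoint (𝒜 g) (⨆ h ∈ ({h | h ≠ g} : Set G), 𝒜 h))
    (hmul : ∀ g h : G, ∀ x y : Matrix (Fin 3) (Fin 3) K,
      x ∈ 𝒜 g → y ∈ 𝒜 h → x * y ∈ 𝒜 (g * h))
    (hone : (1 : Matrix (Fin 3) (Fin 3) K) ∈ 𝒜 1)
    (hquot : ∀ x ∈ 𝒜 (1 : G), ∃ lam : K, IsNilpotent (x - lam • (1 : Matrix (Fin 3) (Fin 3) K)))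
    (g : G) (a : Matrix (Fin 3) (Fin 3) K) (ha : a ∈ 𝒜 g)
    (hnil : ¬ IsNilpotent a) :
    ∃ b ∈ matAlgA K, a * b = 1 ∧ b * a = 1 := by
  rw [← matAlgASubalgebra_toSubmodule] at hle ⊢
  have hA : a ∈ matAlgASubalgebra K := hle g ha
  have hfin : IsOfFinOrder g := isOfFinOrder_of_mem_of_not_isNilpotent 𝒜
    (fun g => by simpa using hind g) hmul hone ha hnil
  obtain ⟨c, hc⟩ := hquot _ (by
    simpa [pow_orderOf_eq_one] using pow_mem_graded 𝒜 hmul hone ha (orderOf g))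
  have hdet : IsUnit a.det :=
    hA.1.isUnit_det_of_isNilpotent_pow_sub hnil hfin.orderOf_pos.ne' hc
  exact ⟨a⁻¹, nonsing_inv_mem_subalgebra _ hA, mul_nonsing_inv a hdet, nonsing_inv_mul a hdet⟩

/-- Let `A = ⊕_{g∈G} 𝒜 g` be a grading of `A` by an abelian group `G` such that
every element of the identity component is a scalar multiple of the identity
modulo a nilpotent (i.e. `𝒜 1 / J(𝒜 1) ≅ K·E`).  Then every non-nilpotent
homogeneous element of `A` is invertible (with inverse in `A`). -/
theorem stmt_2 (K : Type*) [Field K] (G : Type*) [CommGroup G]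
    (𝒜 : G → Submodule K (Matrix (Fin 3) (Fin 3) K))
    (hle : ∀ g, 𝒜 g ≤ matAlgA K)
    (hsup : (⨆ g, 𝒜 g) = matAlgA K)
    (hind : ∀ g, Disjoint (𝒜 g) (⨆ h ∈ ({h | h ≠ g} : Set G), 𝒜 h))
    (hmul : ∀ g h : G, ∀ x y : Matrix (Fin 3) (Fin 3) K,
      x ∈ 𝒜 g → y ∈ 𝒜 h → x * y ∈ 𝒜 (g * h))
    (hone : (1 : Matrix (Fin 3) (Fin 3) K) ∈ 𝒜 1)
    (hquot : ∀ x ∈ 𝒜 (1 : G), ∃ lam : K, IsNilpotent (x - lam • (1 : Matrix (Fin 3) (Fin 3) K)))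
    (g : G) (a : Matrix (Fin 3) (Fin 3) K) (ha : a ∈ 𝒜 g)
    (hnil : ¬ IsNilpotent a) :
    ∃ b ∈ matAlgA K, a * b = 1 ∧ b * a = 1 :=
  stmt_2_general K G 𝒜 hle hind hmul hone hquot g a ha hnil
end

section
/- If A = ⊕_{g∈G} A_g is a G-grading of A by a group G, then the grading is elementary (i.e., there exists a triple (g₁,g₂,g₃) ∈ G³ such that each matrix unit e_{ij} in A is homogeneous of degree g_i^{-1}g_j, and e_{11}+e_{33} is homogeneous of degree 1_G) if and only if the matrix units e_{12}, e_{13}, e_{23}, e_{22}, and e_{11}+e_{33} are all homogeneous elements. -/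
/-!
A nonzero idempotent `e` of degree `g` also has degree `g * g`, and homogeneous components
of distinct degrees meet only in `0`, so `g = 1`; this settles `e₂₂` and `e₁₁ + e₃₃`.
With `e₁₂` of degree `a` and `e₂₃` of degree `b`, the triple `(1, a, a * b)` is then elementary,
because `e₁₃ = e₁₂ e₂₃` has degree `a * b`.
-/

theorem iSupIndep.eq_of_mem_of_ne_zero {R M ι : Type*} [Semiring R] [AddCommMonoid M]
    [Module R M] {p : ι → Submodule R M} (hp : iSupIndep p) {x : M} (hx : x ≠ 0)
    {i j : ι} (hi : x ∈ p i) (hj : x ∈ p j) : i = j := by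
  by_contra hij
  exact hx (Submodule.disjoint_def.mp (hp.pairwiseDisjoint hij) x hi hj)

theorem degree_eq_one_of_isIdempotentElem {R A G : Type*} [Semiring R] [Semiring A]
    [Module R A] [LeftCancelMonoid G] {𝒜 : G → Submodule R A} (hind : iSupIndep 𝒜)
    (hmul : ∀ g h : G, ∀ x y : A, x ∈ 𝒜 g → y ∈ 𝒜 h → x * y ∈ 𝒜 (g * h))
    {e : A} (he : IsIdempotentElem e) (he0 : e ≠ 0) {g : G} (hg : e ∈ 𝒜 g) : g = 1 := by
  have hgg : e ∈ 𝒜 (g * g) := he ▸ hmul g g e e hg hg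
  exact mul_eq_left.mp (hind.eq_of_mem_of_ne_zero he0 hgg hg)

section MatrixUnits

variable (R : Type*) [Semiring R]

theorem isIdempotentElem_e22 : IsIdempotentElem !![(0:R),0,0;0,1,0;0,0,0] := by
  rw [IsIdempotentElem, Matrix.mul_fin_three]
  simp

theorem isIdempotentElem_e11_add_e33 : IsIdempotentElem !![(1:R),0,0;0,0,0;0,0,1] := by
  rw [IsIdempotentElem, Matrix.mul_fin_three]
  simp

theorem e22_ne_zero [Nontrivial R] : !![(0:R),0,0;0,1,0;0,0,0] ≠ 0 :=
  fun h ↦ by simpa using congr_fun₂ h 1 1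

theorem e11_add_e33_ne_zero [Nontrivial R] : !![(1:R),0,0;0,0,0;0,0,1] ≠ 0 :=
  fun h ↦ by simpa using congr_fun₂ h 0 0

theorem e12_mul_e23 :
    !![(0:R),1,0;0,0,0;0,0,0] * !![(0:R),0,0;0,0,1;0,0,0] = !![(0:R),0,1;0,0,0;0,0,0] := by
  rw [Matrix.mul_fin_three]
  simp

end MatrixUnits

theorem stmt_4_general (K : Type*) [Field K] (G : Type*) [Group G]
    (𝒜 : G → Submodule K (Matrix (Fin 3) (Fin 3) K))
    (hind : ∀ g, Disjoint (𝒜 g) (⨆ h ∈ ({h | h ≠ g} : Set G), 𝒜 h))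
    (hmul : ∀ g h : G, ∀ x y : Matrix (Fin 3) (Fin 3) K,
      x ∈ 𝒜 g → y ∈ 𝒜 h → x * y ∈ 𝒜 (g * h)) :
    (∃ g₁ g₂ g₃ : G,
        !![(0:K),1,0;0,0,0;0,0,0] ∈ 𝒜 (g₁⁻¹ * g₂) ∧
        !![(0:K),0,0;0,0,1;0,0,0] ∈ 𝒜 (g₂⁻¹ * g₃) ∧
        !![(0:K),0,1;0,0,0;0,0,0] ∈ 𝒜 (g₁⁻¹ * g₃) ∧
        !![(0:K),0,0;0,1,0;0,0,0] ∈ 𝒜 (g₂⁻¹ * g₂) ∧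
        !![(1:K),0,0;0,0,0;0,0,1] ∈ 𝒜 (1 : G))
      ↔
    ((∃ g, !![(0:K),1,0;0,0,0;0,0,0] ∈ 𝒜 g) ∧
     (∃ g, !![(0:K),0,0;0,0,1;0,0,0] ∈ 𝒜 g) ∧
     (∃ g, !![(0:K),0,1;0,0,0;0,0,0] ∈ 𝒜 g) ∧
     (∃ g, !![(0:K),0,0;0,1,0;0,0,0] ∈ 𝒜 g) ∧
     (∃ g, !![(1:K),0,0;0,0,0;0,0,1] ∈ 𝒜 g)) := by
  have hindep : iSupIndep 𝒜 := hind
  constructor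
  · rintro ⟨g₁, g₂, g₃, h₁₂, h₂₃, h₁₃, h₂₂, hu⟩
    exact ⟨⟨_, h₁₂⟩, ⟨_, h₂₃⟩, ⟨_, h₁₃⟩, ⟨_, h₂₂⟩, ⟨_, hu⟩⟩
  · rintro ⟨⟨a, ha⟩, ⟨b, hb⟩, -, ⟨d, hd⟩, ⟨u, hu⟩⟩
    obtain rfl := degree_eq_one_of_isIdempotentElem hindep hmul
      (isIdempotentElem_e22 K) (e22_ne_zero K) hd
    obtain rfl := degree_eq_one_of_isIdempotentElem hindep hmul
      (isIdempotentElem_e11_add_e33 K) (e11_add_e33_ne_zero K) hu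
    refine ⟨1, a, a * b, by simpa using ha, by simpa using hb, ?_, by simpa using hd, hu⟩
    rw [inv_one, one_mul, ← e12_mul_e23]
    exact hmul a b _ _ ha hb

/-- A `G`-grading of `A` is elementary (defined by a triple `(g₁,g₂,g₃)` with
`e_{ij}` of degree `gᵢ⁻¹gⱼ` and `e₁₁+e₃₃` of degree `1`) if and only if the
matrix units `e₁₂, e₂₃, e₁₃, e₂₂` and `e₁₁+e₃₃` are all homogeneous. -/
theorem stmt_4 (K : Type*) [Field K] (G : Type*) [Group G]
    (𝒜 : G → Submodule K (Matrix (Fin 3) (Fin 3) K))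
    (hle : ∀ g, 𝒜 g ≤ matAlgA K)
    (hsup : (⨆ g, 𝒜 g) = matAlgA K)
    (hind : ∀ g, Disjoint (𝒜 g) (⨆ h ∈ ({h | h ≠ g} : Set G), 𝒜 h))
    (hmul : ∀ g h : G, ∀ x y : Matrix (Fin 3) (Fin 3) K,
      x ∈ 𝒜 g → y ∈ 𝒜 h → x * y ∈ 𝒜 (g * h)) :
    (∃ g₁ g₂ g₃ : G,
        !![(0:K),1,0;0,0,0;0,0,0] ∈ 𝒜 (g₁⁻¹ * g₂) ∧
        !![(0:K),0,0;0,0,1;0,0,0] ∈ 𝒜 (g₂⁻¹ * g₃) ∧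
        !![(0:K),0,1;0,0,0;0,0,0] ∈ 𝒜 (g₁⁻¹ * g₃) ∧
        !![(0:K),0,0;0,1,0;0,0,0] ∈ 𝒜 (g₂⁻¹ * g₂) ∧
        !![(1:K),0,0;0,0,0;0,0,1] ∈ 𝒜 (1 : G))
      ↔
    ((∃ g, !![(0:K),1,0;0,0,0;0,0,0] ∈ 𝒜 g) ∧
     (∃ g, !![(0:K),0,0;0,0,1;0,0,0] ∈ 𝒜 g) ∧
     (∃ g, !![(0:K),0,1;0,0,0;0,0,0] ∈ 𝒜 g) ∧
     (∃ g, !![(0:K),0,0;0,1,0;0,0,0] ∈ 𝒜 g) ∧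
     (∃ g, !![(1:K),0,0;0,0,0;0,0,1] ∈ 𝒜 g)) :=
  stmt_4_general K G 𝒜 hind hmul
end

section
/- Every idempotent t in the subspace Span{e_{12}, e_{13}, e_{23}, e_{22}} of A has the form t = [[0,a,ac],[0,1,c],[0,0,0]] for some a,c ∈ K, and for any such t, the matrix P = [[1,a,0],[0,1,-c],[0,0,1]] satisfies P⁻¹tP = e_{22}. -/
/-- Every nonzero idempotent `t` in `Span{e₁₂, e₁₃, e₂₃, e₂₂}` has the form
`[[0,a,ac],[0,1,c],[0,0,0]]`, and for such `t` the matrix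
`P = [[1,a,0],[0,1,-c],[0,0,1]]` satisfies `P⁻¹ t P = e₂₂`. -/
theorem stmt_6 (K : Type*) [Field K] (t : Matrix (Fin 3) (Fin 3) K)
    (ht : t ∈ Submodule.span K
      ({!![0,1,0;0,0,0;0,0,0], !![0,0,1;0,0,0;0,0,0],
        !![0,0,0;0,0,1;0,0,0], !![0,0,0;0,1,0;0,0,0]} :
        Set (Matrix (Fin 3) (Fin 3) K)))
    (hidem : t * t = t) (hne : t ≠ 0) :
    ∃ a c : K, t = !![0, a, a * c; 0, 1, c; 0, 0, 0] ∧
      (!![(1:K), a, 0; 0, 1, -c; 0, 0, 1])⁻¹ * t * !![(1:K), a, 0; 0, 1, -c; 0, 0, 1]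
        = !![(0:K),0,0;0,1,0;0,0,0] := by
  have hz : t 0 0 = 0 ∧ t 1 0 = 0 ∧ t 2 0 = 0 ∧ t 2 1 = 0 ∧ t 2 2 = 0 := by
    clear hidem hne
    induction ht using Submodule.span_induction with
    | mem x hx =>
      rcases hx with h | h | h | h <;> subst h <;>
        refine ⟨?_, ?_, ?_, ?_, ?_⟩ <;>
        simp [Matrix.vecHead, Matrix.vecTail]
    | zero => simp
    | add x y _ _ hx hy =>
      obtain ⟨h1, h2, h3, h4, h5⟩ := hx
      obtain ⟨g1, g2, g3, g4, g5⟩ := hy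
      refine ⟨?_, ?_, ?_, ?_, ?_⟩ <;>
        simp [Matrix.add_apply, h1, h2, h3, h4, h5, g1, g2, g3, g4, g5]
    | smul r x _ hx =>
      obtain ⟨h1, h2, h3, h4, h5⟩ := hx
      refine ⟨?_, ?_, ?_, ?_, ?_⟩ <;>
        simp [Matrix.smul_apply, h1, h2, h3, h4, h5]
  obtain ⟨h1, h2, h3, h4, h5⟩ := hz
  set a := t 0 1 with ha
  set b := t 0 2 with hb
  set d := t 1 1 with hd
  set c := t 1 2 with hc
  have key : ∀ i j, t i 0 * t 0 j + t i 1 * t 1 j + t i 2 * t 2 j = t i j := by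
    intro i j
    have := congrFun (congrFun hidem i) j
    rwa [Matrix.mul_apply, Fin.sum_univ_three] at this
  have e1 : a * d = a := by have := key 0 1; rw [h1, h4] at this; simpa using this
  have e2 : a * c = b := by have := key 0 2; rw [h1, h5] at this; simpa using this
  have e3 : d * d = d := by have := key 1 1; rw [h2, h4] at this; simpa using this
  have e4 : d * c = c := by have := key 1 2; rw [h2, h5] at this; simpa using this
  have hform : t = !![0, a, b; 0, d, c; 0, 0, 0] := by
    ext i j
    fin_cases i <;> fin_cases j <;>
      simp [h1, h2, h3, h4, h5, ha, hb, hd, hc, Matrix.vecHead, Matrix.vecTail]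
  have hd01 : d = 0 ∨ d = 1 := by
    rcases mul_eq_zero.mp (show d * (d - 1) = 0 by ring_nf; linear_combination e3) with h | h
    · exact Or.inl h
    · exact Or.inr (by linear_combination h)
  have hd1 : d = 1 := by
    rcases hd01 with h | h
    · exfalso
      apply hne
      have ha0 : a = 0 := by rw [h, mul_zero] at e1; exact e1.symm
      have hc0 : c = 0 := by rw [h, zero_mul] at e4; exact e4.symm
      have hb0 : b = 0 := by rw [ha0, zero_mul] at e2; exact e2.symm
      rw [hform, h, ha0, hb0, hc0]
      ext i j
      fin_cases i <;> fin_cases j <;> simp [Matrix.vecHead, Matrix.vecTail]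
    · exact h
  refine ⟨a, c, ?_, ?_⟩
  · rw [hform, hd1, e2]
  · have hPQ : (!![(1:K), a, 0; 0, 1, -c; 0, 0, 1]) *
        (!![(1:K), -a, -(a*c); 0, 1, c; 0, 0, 1]) = 1 := by
      ext i j
      fin_cases i <;> fin_cases j <;>
        (simp [Matrix.mul_apply, Fin.sum_univ_three, Matrix.one_apply,
          Matrix.vecHead, Matrix.vecTail]; try ring)
    have hinv : (!![(1:K), a, 0; 0, 1, -c; 0, 0, 1])⁻¹ =
        !![(1:K), -a, -(a*c); 0, 1, c; 0, 0, 1] :=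
      Matrix.inv_eq_right_inv hPQ
    rw [hinv, hform, hd1, ← e2]
    ext i j
    fin_cases i <;> fin_cases j <;>
      (simp [Matrix.mul_apply, Fin.sum_univ_three,
        Matrix.vecHead, Matrix.vecTail]; try ring)
end

section
/- For any matrices u₁,…,u_s of the form α(e_{11}+e_{33}), any matrices v₁,…,v_t of the form β e_{22}, and w = λe_{12}, one has u₁⋯u_s · w · v₁⋯v_t = (∏αᵢ)λ(∏βⱼ)·e_{12}. Consequently, the multilinear monomials y_{i₁}⋯y_{i_s} z y_{j₁}⋯y_{j_t} (with i₁<⋯<i_s, j₁<⋯<j_t, s+t = m) are linearly independent modulo the ℤ₂-graded identities of A¹. -/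
/-!
Every even test matrix is taken diagonal, `diagBlock x y = x (e₁₁ + e₃₃) + y e₂₂`. Such matrices
multiply entrywise, and `diagBlock a b * e₁₂ * diagBlock a' b' = (a b') e₁₂`: only the `(1,1)`-entry
of the left factor and the `(2,2)`-entry of the right factor survive. Hence a monomial whose even
variables before `z` are the set `S` evaluates, at `yᵢ = diagBlock (dᵢ) (gᵢ)` and `z = e₁₂`, to
`(∏_{i ∈ S} dᵢ)(∏_{i ∉ S} gᵢ) e₁₂`. Choosing `d` the indicator of a set `S₀` and `g` that of its
complement kills every monomial except the one with `S = S₀`, so each coefficient of a graded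
identity of this shape vanishes.
-/

open Finset

theorem Finset.prod_map_sort {ι M : Type*} [LinearOrder ι] [CommMonoid M] (s : Finset ι) (f : ι → M) :
    ((s.sort (· ≤ ·)).map f).prod = ∏ i ∈ s, f i :=
  ((s.sort_perm_toList _).map f).prod_eq.trans (s.prod_map_toList f)

namespace UpperTriangularSuperalgebra

variable {R : Type*}

def diagBlock [Zero R] (x y : R) : Matrix (Fin 3) (Fin 3) R :=
  !![x, 0, 0; 0, y, 0; 0, 0, x]

section Semiring

variable [Semiring R]

theorem diagBlock_mul_diagBlock (x y x' y' : R) :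
    diagBlock x y * diagBlock x' y' = diagBlock (x * x') (y * y') := by
  simp [diagBlock]

theorem diagBlock_one_one : diagBlock (1 : R) 1 = 1 := by
  simp [diagBlock, Matrix.one_fin_three]

theorem list_prod_map_diagBlock {ι : Type*} (d g : ι → R) (l : List ι) :
    (l.map fun i => diagBlock (d i) (g i)).prod = diagBlock (l.map d).prod (l.map g).prod := by
  induction l with
  | nil => simp [diagBlock_one_one]
  | cons i l ih => simp [ih, diagBlock_mul_diagBlock]

theorem smul_e11_add_e33 (α : R) : α • !![(1 : R), 0, 0; 0, 0, 0; 0, 0, 1] = diagBlock α 0 := by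
  simp [diagBlock, Matrix.smul_of, Matrix.smul_cons]

theorem smul_e22 (β : R) : β • !![(0 : R), 0, 0; 0, 1, 0; 0, 0, 0] = diagBlock 0 β := by
  simp [diagBlock, Matrix.smul_of, Matrix.smul_cons]

theorem diagBlock_mul_smul_e12_mul_diagBlock (a b lam a' b' : R) :
    diagBlock a b * (lam • !![(0 : R), 1, 0; 0, 0, 0; 0, 0, 0]) * diagBlock a' b'
      = (a * lam * b') • !![(0 : R), 1, 0; 0, 0, 0; 0, 0, 0] := by
  simp only [diagBlock, Matrix.smul_of, Matrix.smul_cons, Matrix.smul_empty, Matrix.mul_fin_three,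
    smul_eq_mul, mul_zero, mul_one, zero_mul, add_zero, zero_add]

end Semiring

section CommSemiring

variable [CommSemiring R] {ι : Type*} [DecidableEq ι] [Fintype ι]

theorem sort_prod_mul_e12_mul_sort_prod [LinearOrder ι] (d g : ι → R) (lam : R) (S : Finset ι) :
    ((S.sort (· ≤ ·)).map fun i => diagBlock (d i) (g i)).prod
        * (lam • !![(0 : R), 1, 0; 0, 0, 0; 0, 0, 0])
        * ((Sᶜ.sort (· ≤ ·)).map fun i => diagBlock (d i) (g i)).prod
      = ((∏ i ∈ S, d i) * lam * ∏ i ∈ Sᶜ, g i) • !![(0 : R), 1, 0; 0, 0, 0; 0, 0, 0] := by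
  simp only [list_prod_map_diagBlock, prod_map_sort, diagBlock_mul_smul_e12_mul_diagBlock]

theorem prod_indicator_mul_prod_indicator_compl (S S₀ : Finset ι) :
    ((∏ i ∈ S, if i ∈ S₀ then 1 else 0) * ∏ i ∈ Sᶜ, if i ∉ S₀ then 1 else 0 : R)
      = if S = S₀ then 1 else 0 := by
  simp only [prod_boole, ite_zero_mul_ite_zero, mul_one, mem_compl, not_imp_not]
  congr 1
  exact propext ⟨fun h => Subset.antisymm h.1 h.2, fun h => ⟨h.le, h.ge⟩⟩

theorem sort_prod_indicator_mul_e12_mul_sort_prod [LinearOrder ι] (lam : R) (S S₀ : Finset ι) :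
    ((S.sort (· ≤ ·)).map fun i => diagBlock (if i ∈ S₀ then 1 else 0) (if i ∉ S₀ then 1 else 0)).prod
        * (lam • !![(0 : R), 1, 0; 0, 0, 0; 0, 0, 0])
        * ((Sᶜ.sort (· ≤ ·)).map fun i =>
            diagBlock (if i ∈ S₀ then 1 else 0) (if i ∉ S₀ then 1 else 0)).prod
      = if S = S₀ then lam • !![(0 : R), 1, 0; 0, 0, 0; 0, 0, 0] else 0 := by
  rw [sort_prod_mul_e12_mul_sort_prod, mul_right_comm, prod_indicator_mul_prod_indicator_compl,
    ite_mul, one_mul, zero_mul, ite_smul, zero_smul]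

end CommSemiring

end UpperTriangularSuperalgebra

open UpperTriangularSuperalgebra

theorem stmt_8_general (K : Type*) [Field K]
    (A0 A1 : Set (Matrix (Fin 3) (Fin 3) K))
    (hA0 : A0 = {M | ∃ d g c : K, M = !![d, 0, c; 0, g, 0; 0, 0, d]})
    (hA1 : A1 = {M | ∃ a b : K, M = !![0, a, 0; 0, 0, b; 0, 0, 0]}) :
    (∀ (l₁ l₂ : List K) (lam : K),
      (l₁.map fun α => α • !![(1:K),0,0;0,0,0;0,0,1]).prod
          * (lam • !![(0:K),1,0;0,0,0;0,0,0])
          * (l₂.map fun β => β • !![(0:K),0,0;0,1,0;0,0,0]).prod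
        = (l₁.prod * lam * l₂.prod) • !![(0:K),1,0;0,0,0;0,0,0]) ∧
    (∀ (m : ℕ) (coeff : Finset (Fin m) → K),
      (∀ Y : Fin m → Matrix (Fin 3) (Fin 3) K, (∀ i, Y i ∈ A0) →
        ∀ Z ∈ A1,
          ∑ S : Finset (Fin m), coeff S •
            (((S.sort (· ≤ ·)).map Y).prod * Z * ((Sᶜ.sort (· ≤ ·)).map Y).prod) = 0) →
      ∀ S : Finset (Fin m), coeff S = 0) := by
  refine ⟨fun l₁ l₂ lam => ?_, fun m coeff hid S₀ => ?_⟩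
  · simp only [smul_e11_add_e33, smul_e22]
    rw [list_prod_map_diagBlock (fun α => α) (fun _ => 0),
      list_prod_map_diagBlock (fun _ => 0) (fun β => β)]
    simp only [List.map_id', diagBlock_mul_smul_e12_mul_diagBlock]
  · have hY : ∀ i, diagBlock (if i ∈ S₀ then 1 else 0) (if i ∉ S₀ then 1 else 0) ∈ A0 :=
      fun i => hA0 ▸ ⟨_, _, 0, rfl⟩
    have hZ : (1 : K) • !![(0 : K), 1, 0; 0, 0, 0; 0, 0, 0] ∈ A1 := hA1 ▸ ⟨1, 0, one_smul _ _⟩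
    have h := hid _ hY _ hZ
    rw [sum_congr rfl fun S _ => by rw [sort_prod_indicator_mul_e12_mul_sort_prod]] at h
    simp only [smul_ite, smul_zero, sum_ite_eq', mem_univ, if_true, one_smul] at h
    simpa using congrFun (congrFun h 0) 1

/-- First part: `u₁⋯u_s · (λe₁₂) · v₁⋯v_t = (∏αᵢ)λ(∏βⱼ)·e₁₂` where each
`uᵢ = αᵢ(e₁₁+e₃₃)` and each `vⱼ = βⱼe₂₂`.  Second part: the multilinear
monomials `y_{i₁}⋯y_{i_s} z y_{j₁}⋯y_{j_t}` (indices increasing on each side,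
determined by the set of indices placed before `z`) are linearly independent
modulo the ℤ₂-graded identities of `A¹`. -/
theorem stmt_8 (K : Type*) [Field K] [CharZero K]
    (A0 A1 : Set (Matrix (Fin 3) (Fin 3) K))
    (hA0 : A0 = {M | ∃ d g c : K, M = !![d, 0, c; 0, g, 0; 0, 0, d]})
    (hA1 : A1 = {M | ∃ a b : K, M = !![0, a, 0; 0, 0, b; 0, 0, 0]}) :
    (∀ (l₁ l₂ : List K) (lam : K),
      (l₁.map fun α => α • !![(1:K),0,0;0,0,0;0,0,1]).prod
          * (lam • !![(0:K),1,0;0,0,0;0,0,0])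
          * (l₂.map fun β => β • !![(0:K),0,0;0,1,0;0,0,0]).prod
        = (l₁.prod * lam * l₂.prod) • !![(0:K),1,0;0,0,0;0,0,0]) ∧
    (∀ (m : ℕ) (coeff : Finset (Fin m) → K),
      (∀ Y : Fin m → Matrix (Fin 3) (Fin 3) K, (∀ i, Y i ∈ A0) →
        ∀ Z ∈ A1,
          ∑ S : Finset (Fin m), coeff S •
            (((S.sort (· ≤ ·)).map Y).prod * Z * ((Sᶜ.sort (· ≤ ·)).map Y).prod) = 0) →
      ∀ S : Finset (Fin m), coeff S = 0) :=
  stmt_8_general K A0 A1 hA0 hA1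
end

section
/- On the superalgebra A², the polynomial [y₁,y₂][z,y₃] + [y₁,y₂,y₃]z vanishes identically, where [y₁,y₂,y₃] denotes the left-normed commutator [[y₁,y₂],y₃], for all even elements y₁,y₂,y₃ ∈ A₀ and odd elements z ∈ A₁. -/
set_option maxHeartbeats 1000000 in
/-- On `A²`, the polynomial `[y₁,y₂][z,y₃] + [y₁,y₂,y₃]z` vanishes identically. -/
theorem stmt_10 (K : Type*) [Field K]
    (A0 A1 : Set (Matrix (Fin 3) (Fin 3) K))
    (hA0 : A0 = {M | ∃ d g a : K, M = !![d, a, 0; 0, g, 0; 0, 0, d]})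
    (hA1 : A1 = {M | ∃ c b : K, M = !![0, 0, c; 0, 0, b; 0, 0, 0]}) :
    ∀ y₁ ∈ A0, ∀ y₂ ∈ A0, ∀ y₃ ∈ A0, ∀ z ∈ A1,
      (y₁ * y₂ - y₂ * y₁) * (z * y₃ - y₃ * z)
        + ((y₁ * y₂ - y₂ * y₁) * y₃ - y₃ * (y₁ * y₂ - y₂ * y₁)) * z = 0 := by
  subst hA0 hA1
  rintro _ ⟨d₁, g₁, a₁, rfl⟩ _ ⟨d₂, g₂, a₂, rfl⟩ _ ⟨d₃, g₃, a₃, rfl⟩ _ ⟨c, b, rfl⟩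
  ext i j
  fin_cases i <;> fin_cases j <;>
    simp [Matrix.mul_apply, Fin.sum_univ_succ] <;> ring_nf <;> simp [Matrix.vecHead, Matrix.vecTail]
end

section
/- On the superalgebra A³, the polynomial [z,y₃][y₁,y₂] + z[y₁,y₂,y₃] vanishes identically for all even elements y₁,y₂,y₃ ∈ A₀ and odd elements z ∈ A₁, where [y₁,y₂,y₃] = [[y₁,y₂],y₃]. -/
/-- On `A³`, the polynomial `[z,y₃][y₁,y₂] + z[y₁,y₂,y₃]` vanishes identically. -/
theorem stmt_12 (K : Type*) [Field K]
    (A0 A1 : Set (Matrix (Fin 3) (Fin 3) K))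
    (hA0 : A0 = {M | ∃ d g b : K, M = !![d, 0, 0; 0, g, b; 0, 0, d]})
    (hA1 : A1 = {M | ∃ a c : K, M = !![0, a, c; 0, 0, 0; 0, 0, 0]}) :
    ∀ y₁ ∈ A0, ∀ y₂ ∈ A0, ∀ y₃ ∈ A0, ∀ z ∈ A1,
      (z * y₃ - y₃ * z) * (y₁ * y₂ - y₂ * y₁)
        + z * ((y₁ * y₂ - y₂ * y₁) * y₃ - y₃ * (y₁ * y₂ - y₂ * y₁)) = 0 := by
  subst hA0 hA1
  rintro y₁ ⟨d₁, g₁, b₁, rfl⟩ y₂ ⟨d₂, g₂, b₂, rfl⟩ y₃ ⟨d₃, g₃, b₃, rfl⟩ z ⟨a, c, rfl⟩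
  set t : K := g₁ * b₂ + b₁ * d₂ - (g₂ * b₁ + b₂ * d₁) with ht
  have hC : (!![d₁, 0, 0; 0, g₁, b₁; 0, 0, d₁] : Matrix (Fin 3) (Fin 3) K) *
      !![d₂, 0, 0; 0, g₂, b₂; 0, 0, d₂] -
      !![d₂, 0, 0; 0, g₂, b₂; 0, 0, d₂] * !![d₁, 0, 0; 0, g₁, b₁; 0, 0, d₁] =
      !![0, 0, 0; 0, 0, t; 0, 0, 0] := by
    rw [Matrix.mul_fin_three, Matrix.mul_fin_three]
    ext i j
    fin_cases i <;> fin_cases j <;> simp [ht, Matrix.vecHead, Matrix.vecTail] <;> ring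
  rw [hC]
  have hC3 : (!![0, 0, 0; 0, 0, t; 0, 0, 0] : Matrix (Fin 3) (Fin 3) K) *
      !![d₃, 0, 0; 0, g₃, b₃; 0, 0, d₃] -
      !![d₃, 0, 0; 0, g₃, b₃; 0, 0, d₃] * !![0, 0, 0; 0, 0, t; 0, 0, 0] =
      !![0, 0, 0; 0, 0, t * d₃ - g₃ * t; 0, 0, 0] := by
    rw [Matrix.mul_fin_three, Matrix.mul_fin_three]
    ext i j
    fin_cases i <;> fin_cases j <;> simp [Matrix.vecHead, Matrix.vecTail] <;> ring
  have hZ3 : (!![0, a, c] : Matrix (Fin 1) (Fin 3) K) = !![0, a, c] := rfl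
  have hzc : (!![0, a, c; 0, 0, 0; 0, 0, 0] : Matrix (Fin 3) (Fin 3) K) *
      !![d₃, 0, 0; 0, g₃, b₃; 0, 0, d₃] -
      !![d₃, 0, 0; 0, g₃, b₃; 0, 0, d₃] * !![0, a, c; 0, 0, 0; 0, 0, 0] =
      !![0, a * g₃ - d₃ * a, a * b₃; 0, 0, 0; 0, 0, 0] := by
    rw [Matrix.mul_fin_three, Matrix.mul_fin_three]
    ext i j
    fin_cases i <;> fin_cases j <;> simp [Matrix.vecHead, Matrix.vecTail] <;> ring
  rw [hC3, hzc]
  rw [Matrix.mul_fin_three, Matrix.mul_fin_three]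
  ext i j
  fin_cases i <;> fin_cases j <;> simp [ht, Matrix.vecHead, Matrix.vecTail] <;> ring
end

section
/- The polynomials z₁z₂, [y₁,y₂][y₃,y₄], [y₁,y₂]z₁, and [z₁[y₁,y₂], y₃] are ℤ₂-graded polynomial identities of the superalgebra A³. -/
private lemma sub_fin_three' {K : Type*} [Field K]
    (a b c d e f g h i a' b' c' d' e' f' g' h' i' : K) :
    !![a,b,c;d,e,f;g,h,i] - !![a',b',c';d',e',f';g',h',i'] =
    !![a-a',b-b',c-c';d-d',e-e',f-f';g-g',h-h',i-i'] := by
  ext x y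
  fin_cases x <;> fin_cases y <;> rfl

private lemma zero_fin_three' {K : Type*} [Field K] :
    (0 : Matrix (Fin 3) (Fin 3) K) = !![0,0,0;0,0,0;0,0,0] := by
  ext x y
  fin_cases x <;> fin_cases y <;> rfl

private lemma mat3_ext {K : Type*} [Field K]
    {a b c d e f g h i a' b' c' d' e' f' g' h' i' : K}
    (h1 : a = a') (h2 : b = b') (h3 : c = c') (h4 : d = d') (h5 : e = e')
    (h6 : f = f') (h7 : g = g') (h8 : h = h') (h9 : i = i') :
    !![a,b,c;d,e,f;g,h,i] = !![a',b',c';d',e',f';g',h',i'] := by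
  rw [h1,h2,h3,h4,h5,h6,h7,h8,h9]

/-- `z₁z₂`, `[y₁,y₂][y₃,y₄]`, `[y₁,y₂]z₁` and `[z₁[y₁,y₂], y₃]` are ℤ₂-graded
identities of the superalgebra `A³`. -/
theorem stmt_13 (K : Type*) [Field K]
    (A0 A1 : Set (Matrix (Fin 3) (Fin 3) K))
    (hA0 : A0 = {M | ∃ d g b : K, M = !![d, 0, 0; 0, g, b; 0, 0, d]})
    (hA1 : A1 = {M | ∃ a c : K, M = !![0, a, c; 0, 0, 0; 0, 0, 0]}) :
    (∀ z₁ ∈ A1, ∀ z₂ ∈ A1, z₁ * z₂ = 0) ∧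
    (∀ y₁ ∈ A0, ∀ y₂ ∈ A0, ∀ y₃ ∈ A0, ∀ y₄ ∈ A0,
      (y₁ * y₂ - y₂ * y₁) * (y₃ * y₄ - y₄ * y₃) = 0) ∧
    (∀ y₁ ∈ A0, ∀ y₂ ∈ A0, ∀ z₁ ∈ A1, (y₁ * y₂ - y₂ * y₁) * z₁ = 0) ∧
    (∀ z₁ ∈ A1, ∀ y₁ ∈ A0, ∀ y₂ ∈ A0, ∀ y₃ ∈ A0,
      (z₁ * (y₁ * y₂ - y₂ * y₁)) * y₃ - y₃ * (z₁ * (y₁ * y₂ - y₂ * y₁)) = 0) := by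
  subst hA0 hA1
  refine ⟨?_, ?_, ?_, ?_⟩
  · rintro _ ⟨a, c, rfl⟩ _ ⟨a', c', rfl⟩
    rw [Matrix.mul_fin_three, zero_fin_three']
    exact mat3_ext (by ring) (by ring) (by ring) (by ring) (by ring) (by ring) (by ring)
      (by ring) (by ring)
  · rintro _ ⟨d, g, b, rfl⟩ _ ⟨d', g', b', rfl⟩ _ ⟨d'', g'', b'', rfl⟩ _ ⟨d''', g''', b''', rfl⟩
    rw [Matrix.mul_fin_three, Matrix.mul_fin_three, Matrix.mul_fin_three, Matrix.mul_fin_three,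
      sub_fin_three', sub_fin_three', Matrix.mul_fin_three, zero_fin_three']
    exact mat3_ext (by ring) (by ring) (by ring) (by ring) (by ring) (by ring) (by ring)
      (by ring) (by ring)
  · rintro _ ⟨d, g, b, rfl⟩ _ ⟨d', g', b', rfl⟩ _ ⟨a, c, rfl⟩
    rw [Matrix.mul_fin_three, Matrix.mul_fin_three, sub_fin_three', Matrix.mul_fin_three,
      zero_fin_three']
    exact mat3_ext (by ring) (by ring) (by ring) (by ring) (by ring) (by ring) (by ring)
      (by ring) (by ring)
  · rintro _ ⟨a, c, rfl⟩ _ ⟨d, g, b, rfl⟩ _ ⟨d', g', b', rfl⟩ _ ⟨d'', g'', b'', rfl⟩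
    rw [Matrix.mul_fin_three, Matrix.mul_fin_three, sub_fin_three', Matrix.mul_fin_three,
      Matrix.mul_fin_three, Matrix.mul_fin_three, sub_fin_three', zero_fin_three']
    exact mat3_ext (by ring) (by ring) (by ring) (by ring) (by ring) (by ring) (by ring)
      (by ring) (by ring)
end

section
/- The following *-polynomial identities hold on (A,*): z₁y₁z₂y₂z₃ = 0, [z₁,z₂] = 0, [z₁y₁z₂, y₂] = 0, and z₁y₁z₂ = z₂y₁z₁, for all symmetric elements y₁,y₂ ∈ A⁺ and skew-symmetric elements z₁,z₂,z₃ ∈ A⁻. -/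
/-- The `*`-identities `z₁y₁z₂y₂z₃ = 0`, `[z₁,z₂] = 0`, `[z₁y₁z₂, y₂] = 0` and
`z₁y₁z₂ = z₂y₁z₁` hold on `(A,*)`, where `*` is reflection along the secondary
diagonal, `A⁺` the symmetric and `A⁻` the skew-symmetric elements. -/
theorem stmt_15 (K : Type*) [Field K] [CharZero K]
    (Aplus Aminus : Set (Matrix (Fin 3) (Fin 3) K))
    (hAp : Aplus = {M | ∃ d a c g : K, M = !![d, a, c; 0, g, a; 0, 0, d]})
    (hAm : Aminus = {M | ∃ a : K, M = !![0, a, 0; 0, 0, -a; 0, 0, 0]}) :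
    (∀ z₁ ∈ Aminus, ∀ y₁ ∈ Aplus, ∀ z₂ ∈ Aminus, ∀ y₂ ∈ Aplus, ∀ z₃ ∈ Aminus,
      z₁ * y₁ * z₂ * y₂ * z₃ = 0) ∧
    (∀ z₁ ∈ Aminus, ∀ z₂ ∈ Aminus, z₁ * z₂ - z₂ * z₁ = 0) ∧
    (∀ z₁ ∈ Aminus, ∀ y₁ ∈ Aplus, ∀ z₂ ∈ Aminus, ∀ y₂ ∈ Aplus,
      (z₁ * y₁ * z₂) * y₂ - y₂ * (z₁ * y₁ * z₂) = 0) ∧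
    (∀ z₁ ∈ Aminus, ∀ y₁ ∈ Aplus, ∀ z₂ ∈ Aminus,
      z₁ * y₁ * z₂ = z₂ * y₁ * z₁) := by
  subst hAp hAm
  refine ⟨?_, ?_, ?_, ?_⟩
  · rintro z₁ ⟨a₁, rfl⟩ y₁ ⟨d₁, b₁, c₁, g₁, rfl⟩ z₂ ⟨a₂, rfl⟩ y₂ ⟨d₂, b₂, c₂, g₂, rfl⟩ z₃ ⟨a₃, rfl⟩
    simp only [Matrix.mul_fin_three]
    ext i j
    fin_cases i <;> fin_cases j <;> simp [Matrix.vecHead, Matrix.vecTail] <;> ring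
  · rintro z₁ ⟨a₁, rfl⟩ z₂ ⟨a₂, rfl⟩
    simp only [Matrix.mul_fin_three]
    ext i j
    fin_cases i <;> fin_cases j <;> simp <;> ring
  · rintro z₁ ⟨a₁, rfl⟩ y₁ ⟨d₁, b₁, c₁, g₁, rfl⟩ z₂ ⟨a₂, rfl⟩ y₂ ⟨d₂, b₂, c₂, g₂, rfl⟩
    simp only [Matrix.mul_fin_three]
    ext i j
    fin_cases i <;> fin_cases j <;> simp <;> ring
  · rintro z₁ ⟨a₁, rfl⟩ y₁ ⟨d₁, b₁, c₁, g₁, rfl⟩ z₂ ⟨a₂, rfl⟩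
    simp only [Matrix.mul_fin_three]
    ext i j
    fin_cases i <;> fin_cases j <;> simp <;> ring
end

section
/- For A = UT_2(K)-like computations in the free algebra modulo the graded *-identities of A: the identity ȳ₁⁺⋯ỹ₁⁺ (y₁⁺)^{i₁-p} z⁺ (y₁⁺)^{i₂-p} ȳ₂⁺⋯ỹ₂⁺ = Σ_{j=0}^{p} (-1)^j C(p,j) (y₁⁺)^{i₁-j}(y₂⁺)^j z⁺ (y₁⁺)^{i₂-p+j}(y₂⁺)^{p-j} holds on A for all even symmetric elements y₁⁺, y₂⁺ and odd symmetric z⁺, where the bars denote alternation in p pairs of copies of y₁⁺ and y₂⁺. In particular, since even symmetric elements commute in A, the alternating sum over simultaneous placements evaluates to the right-hand binomial expression. -/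
open Finset
set_option maxHeartbeats 1000000

private lemma listProd_aux {R : Type*} [Monoid R] {a b : R} (h : Commute a b) :
    ∀ (p : ℕ) (s : Fin p → Bool),
      (List.ofFn fun i : Fin p => if s i then b else a).prod
        = a ^ (p - #(univ.filter fun i => s i = true))
          * b ^ #(univ.filter fun i => s i = true) := by
  intro p
  induction p with
  | zero => intro s; simp
  | succ p ih =>
    intro s
    have hk : #(univ.filter fun i : Fin (p+1) => s i = true)
        = (if s 0 then 1 else 0) + #(univ.filter fun i : Fin p => s i.succ = true) := by
      rw [Finset.card_filter, Finset.card_filter, Fin.sum_univ_succ]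
    have hle : #(univ.filter fun i : Fin p => s i.succ = true) ≤ p :=
      le_trans (Finset.card_filter_le _ _) (by simp)
    set k := #(univ.filter fun i : Fin p => s i.succ = true) with hkdef
    rw [List.ofFn_succ, List.prod_cons, ih (fun i => s i.succ)]
    cases hs0 : s 0 with
    | true =>
      rw [hk, hs0]
      show b * (a ^ (p - k) * b ^ k) = a ^ (p + 1 - (1 + k)) * b ^ (1 + k)
      have h1 : p + 1 - (1 + k) = p - k := by omega
      rw [h1, ← mul_assoc, (h.pow_left (p - k)).symm.eq, mul_assoc, ← pow_succ',
        Nat.add_comm 1 k]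
    | false =>
      rw [hk, hs0]
      show a * (a ^ (p - k) * b ^ k) = a ^ (p + 1 - (0 + k)) * b ^ (0 + k)
      have h1 : p + 1 - (0 + k) = (p - k) + 1 := by omega
      rw [h1, Nat.zero_add, ← mul_assoc, ← pow_succ']

/-- On the superalgebra `A¹` with graded involution, the alternation of
`y₁⁺⋯y₁⁺ (y₁⁺)^{i₁-p} z⁺ (y₁⁺)^{i₂-p} y₂⁺⋯y₂⁺` in `p` pairs of marked copies of
`y₁⁺` and `y₂⁺` equals
`Σ_{j=0}^{p} (-1)^j C(p,j) (y₁⁺)^{i₁-j}(y₂⁺)^j z⁺ (y₁⁺)^{i₂-p+j}(y₂⁺)^{p-j}`. -/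
theorem stmt_18 (K : Type*) [Field K] [CharZero K]
    (A0 : Set (Matrix (Fin 3) (Fin 3) K))
    (hA0 : A0 = {M | ∃ d g c : K, M = !![d, 0, c; 0, g, 0; 0, 0, d]})
    (A1plus : Set (Matrix (Fin 3) (Fin 3) K))
    (hA1p : A1plus = {M | ∃ lam : K,
      M = lam • (!![(0:K),1,0;0,0,0;0,0,0] + !![(0:K),0,0;0,0,1;0,0,0])})
    (y₁ y₂ : Matrix (Fin 3) (Fin 3) K) (hy₁ : y₁ ∈ A0) (hy₂ : y₂ ∈ A0)
    (z : Matrix (Fin 3) (Fin 3) K) (hz : z ∈ A1plus)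
    (p i₁ i₂ : ℕ) (hp : 1 ≤ p) (hi₁ : p ≤ i₁) (hi₂ : p ≤ i₂) :
    ∑ s : Fin p → Bool,
      ((-1 : K) ^ (Finset.univ.filter fun i => s i = true).card) •
        ((List.ofFn fun i : Fin p => if s i then y₂ else y₁).prod
          * y₁ ^ (i₁ - p) * z * y₁ ^ (i₂ - p)
          * (List.ofFn fun i : Fin p => if s i then y₁ else y₂).prod)
      = ∑ j ∈ Finset.range (p + 1),
          ((-1 : K) ^ j * (p.choose j : K)) •
            (y₁ ^ (i₁ - j) * y₂ ^ j * z * y₁ ^ (i₂ - p + j) * y₂ ^ (p - j)) := by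
  -- y₁ and y₂ commute
  have h : Commute y₁ y₂ := by
    rw [hA0] at hy₁ hy₂
    obtain ⟨d₁, g₁, c₁, rfl⟩ := hy₁
    obtain ⟨d₂, g₂, c₂, rfl⟩ := hy₂
    unfold Commute SemiconjBy
    rw [Matrix.mul_fin_three, Matrix.mul_fin_three]
    ring_nf
  set F : ℕ → Matrix (Fin 3) (Fin 3) K := fun j =>
    (-1 : K) ^ j • (y₁ ^ (i₁ - j) * y₂ ^ j * z * y₁ ^ (i₂ - p + j) * y₂ ^ (p - j)) with hF
  -- each summand equals F (card of s)
  have key : ∀ s : Fin p → Bool,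
      ((-1 : K) ^ (Finset.univ.filter fun i => s i = true).card) •
        ((List.ofFn fun i : Fin p => if s i then y₂ else y₁).prod
          * y₁ ^ (i₁ - p) * z * y₁ ^ (i₂ - p)
          * (List.ofFn fun i : Fin p => if s i then y₁ else y₂).prod)
        = F (Finset.univ.filter fun i => s i = true).card := by
    intro s
    set k := #(univ.filter fun i : Fin p => s i = true) with hkdef
    have hkp : k ≤ p := le_trans (Finset.card_filter_le _ _) (by simp)
    rw [listProd_aux h p s, listProd_aux h.symm p s, hF]
    refine congrArg (fun M => ((-1:K)^k) • M) ?_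
    have e1 : y₁ ^ (p - k) * y₂ ^ k * y₁ ^ (i₁ - p) = y₁ ^ (i₁ - k) * y₂ ^ k := by
      rw [mul_assoc, (h.symm.pow_pow k (i₁ - p)).eq, ← mul_assoc, ← pow_add]
      congr 2
      omega
    have e2 : y₁ ^ (i₂ - p) * (y₂ ^ (p - k) * y₁ ^ k)
        = y₁ ^ (i₂ - p + k) * y₂ ^ (p - k) := by
      rw [(h.symm.pow_pow (p - k) k).eq, ← mul_assoc, ← pow_add]
    calc y₁ ^ (p - k) * y₂ ^ k * y₁ ^ (i₁ - p) * z * y₁ ^ (i₂ - p)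
          * (y₂ ^ (p - k) * y₁ ^ k)
        = (y₁ ^ (p - k) * y₂ ^ k * y₁ ^ (i₁ - p)) * z
            * (y₁ ^ (i₂ - p) * (y₂ ^ (p - k) * y₁ ^ k)) := by
          simp only [mul_assoc]
      _ = (y₁ ^ (i₁ - k) * y₂ ^ k) * z * (y₁ ^ (i₂ - p + k) * y₂ ^ (p - k)) := by
          rw [e1, e2]
      _ = y₁ ^ (i₁ - k) * y₂ ^ k * z * y₁ ^ (i₂ - p + k) * y₂ ^ (p - k) := by
          simp only [mul_assoc]
  simp only [key]
  -- reindex the sum over boolean functions by subsets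
  have hb : Function.Bijective
      (fun s : Fin p → Bool => univ.filter fun i => s i = true) := by
    constructor
    · intro s t hst
      funext i
      have h2 : (univ.filter fun i => s i = true) = univ.filter fun i => t i = true := hst
      have := Finset.ext_iff.mp h2 i
      simpa using this
    · intro t
      refine ⟨fun i => decide (i ∈ t), ?_⟩
      ext i
      simp
  have := Fintype.sum_bijective _ hb
    (fun s : Fin p → Bool => F (univ.filter fun i => s i = true).card)
    (fun t : Finset (Fin p) => F t.card) (fun s => rfl)
  rw [this]
  have huniv : (univ : Finset (Finset (Fin p))) = (univ : Finset (Fin p)).powerset := by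
    simp [Finset.powerset_univ]
  rw [huniv, Finset.sum_powerset (univ : Finset (Fin p)) (fun t => F t.card)]
  rw [Finset.card_univ, Fintype.card_fin]
  refine Finset.sum_congr rfl fun j hj => ?_
  have : ∀ t ∈ Finset.powersetCard j (univ : Finset (Fin p)), F t.card = F j := by
    intro t ht
    rw [(Finset.mem_powersetCard.1 ht).2]
  rw [Finset.sum_congr rfl this, Finset.sum_const, Finset.card_powersetCard,
    Finset.card_univ, Fintype.card_fin, hF]
  rw [← Nat.cast_smul_eq_nsmul K, smul_smul,
    mul_comm ((p.choose j : K)) ((-1:K)^j)]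
end

section
/- Evaluating on A: with z⁺ = e_{12} + e_{23} and y_i⁺ = α_i(e_{11}+e_{33}) + β_i e_{22}, the element Σ_{j=0}^{p} (-1)^j C(p,j) (y₁⁺)^{t₁-j}(y₂⁺)^{j} z⁺ (y₁⁺)^{t₂-p+j}(y₂⁺)^{p-j} equals (β₂α₁ - β₁α₂)^p α₁^{t₁-p} β₁^{t₂-p} · e_{12} plus a scalar multiple of e_{23}, for all integers p ≥ 0 and t₁, t₂ ≥ p. -/
open Finset Matrix

section aux

variable {K : Type*} [Field K]

private def Dm (K : Type*) [Field K] : Matrix (Fin 3) (Fin 3) K := !![(1:K),0,0;0,0,0;0,0,1]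
private def Em (K : Type*) [Field K] : Matrix (Fin 3) (Fin 3) K := !![(0:K),0,0;0,1,0;0,0,0]
private def F12 (K : Type*) [Field K] : Matrix (Fin 3) (Fin 3) K := !![(0:K),1,0;0,0,0;0,0,0]
private def F23 (K : Type*) [Field K] : Matrix (Fin 3) (Fin 3) K := !![(0:K),0,0;0,0,1;0,0,0]

private lemma pow_diag (α β : K) (n : ℕ) :
    (α • Dm K + β • Em K) ^ n = α ^ n • Dm K + β ^ n • Em K := by
  induction n with
  | zero =>
    simp only [pow_zero, one_smul]
    ext i j
    fin_cases i <;> fin_cases j <;> simp [Dm, Em, Matrix.one_apply, Matrix.vecHead, Matrix.vecTail]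
  | succ n ih =>
    rw [pow_succ, ih]
    ext i j
    fin_cases i <;> fin_cases j <;>
      simp [Dm, Em, Matrix.mul_apply, Fin.sum_univ_three, pow_succ, Matrix.vecHead, Matrix.vecTail] <;> ring

private lemma key (a b c d : K) :
    (a • Dm K + b • Em K) * (F12 K + F23 K) * (c • Dm K + d • Em K)
      = (a * d) • F12 K + (b * c) • F23 K := by
  ext i j
  fin_cases i <;> fin_cases j <;>
    simp [Dm, Em, F12, F23, Matrix.mul_apply, Fin.sum_univ_three, Matrix.vecHead, Matrix.vecTail] <;> ring

private lemma scalar_id (α₁ α₂ β₁ β₂ : K) (p t₁ t₂ : ℕ) (ht₁ : p ≤ t₁) (ht₂ : p ≤ t₂) :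
    ∑ j ∈ range (p + 1),
        ((-1 : K) ^ j * (p.choose j : K)) * (α₁ ^ (t₁ - j) * α₂ ^ j * (β₁ ^ (t₂ - p + j) * β₂ ^ (p - j)))
      = (β₂ * α₁ - β₁ * α₂) ^ p * α₁ ^ (t₁ - p) * β₁ ^ (t₂ - p) := by
  have h1 : ∀ j ∈ range (p + 1),
      ((-1 : K) ^ j * (p.choose j : K)) * (α₁ ^ (t₁ - j) * α₂ ^ j * (β₁ ^ (t₂ - p + j) * β₂ ^ (p - j)))
      = (α₁ ^ (t₁ - p) * β₁ ^ (t₂ - p)) *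
        ((-1 : K) ^ j * ((β₂ * α₁) ^ (p - j) * (β₁ * α₂) ^ j * (p.choose j : K))) := by
    intro j hj
    rw [mem_range] at hj
    have hjp : j ≤ p := by omega
    have e1 : t₁ - j = (t₁ - p) + (p - j) := by omega
    rw [e1, pow_add, pow_add, mul_pow, mul_pow]
    ring
  rw [sum_congr rfl h1, ← mul_sum]
  have hbin : ∑ j ∈ range (p + 1),
      (-1 : K) ^ j * ((β₂ * α₁) ^ (p - j) * (β₁ * α₂) ^ j * (p.choose j : K))
      = (β₂ * α₁ - β₁ * α₂) ^ p := by
    rw [sub_pow, ← Finset.sum_range_reflect]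
    refine Finset.sum_congr rfl fun j hj => ?_
    rw [mem_range] at hj
    have hjp : j ≤ p := by omega
    rw [show p + 1 - 1 - j = p - j by omega, show p - (p - j) = j by omega,
      Nat.choose_symm hjp,
      show (-1 : K) ^ (j + p) = (-1 : K) ^ (p - j) by
        rw [show j + p = (p - j) + 2 * j by omega, pow_add, pow_mul]; simp]
    ring
  rw [hbin]
  ring

end aux

/-- Evaluating on `A`: with `z⁺ = e₁₂ + e₂₃` and `yᵢ⁺ = αᵢ(e₁₁+e₃₃) + βᵢe₂₂`,
`Σ_{j=0}^{p} (-1)^j C(p,j) (y₁⁺)^{t₁-j}(y₂⁺)^j z⁺ (y₁⁺)^{t₂-p+j}(y₂⁺)^{p-j}`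
equals `(β₂α₁ - β₁α₂)^p α₁^{t₁-p} β₁^{t₂-p} · e₁₂` plus a scalar multiple of `e₂₃`. -/
theorem stmt_19 (K : Type*) [Field K]
    (α₁ α₂ β₁ β₂ : K) (p t₁ t₂ : ℕ) (ht₁ : p ≤ t₁) (ht₂ : p ≤ t₂)
    (z y₁ y₂ : Matrix (Fin 3) (Fin 3) K)
    (hz : z = !![(0:K),1,0;0,0,0;0,0,0] + !![(0:K),0,0;0,0,1;0,0,0])
    (hy₁ : y₁ = α₁ • !![(1:K),0,0;0,0,0;0,0,1] + β₁ • !![(0:K),0,0;0,1,0;0,0,0])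
    (hy₂ : y₂ = α₂ • !![(1:K),0,0;0,0,0;0,0,1] + β₂ • !![(0:K),0,0;0,1,0;0,0,0]) :
    ∃ mu : K,
      ∑ j ∈ Finset.range (p + 1),
          ((-1 : K) ^ j * (p.choose j : K)) •
            (y₁ ^ (t₁ - j) * y₂ ^ j * z * y₁ ^ (t₂ - p + j) * y₂ ^ (p - j))
        = ((β₂ * α₁ - β₁ * α₂) ^ p * α₁ ^ (t₁ - p) * β₁ ^ (t₂ - p))
            • !![(0:K),1,0;0,0,0;0,0,0]
          + mu • !![(0:K),0,0;0,0,1;0,0,0] := by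
  have hz' : z = F12 K + F23 K := hz
  have hy₁' : y₁ = α₁ • Dm K + β₁ • Em K := hy₁
  have hy₂' : y₂ = α₂ • Dm K + β₂ • Em K := hy₂
  refine ⟨∑ j ∈ range (p + 1),
      ((-1 : K) ^ j * (p.choose j : K)) *
        (β₁ ^ (t₁ - j) * β₂ ^ j * (α₁ ^ (t₂ - p + j) * α₂ ^ (p - j))), ?_⟩
  have hterm : ∀ j ∈ range (p + 1),
      ((-1 : K) ^ j * (p.choose j : K)) •
        (y₁ ^ (t₁ - j) * y₂ ^ j * z * y₁ ^ (t₂ - p + j) * y₂ ^ (p - j))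
      = (((-1 : K) ^ j * (p.choose j : K)) *
          (α₁ ^ (t₁ - j) * α₂ ^ j * (β₁ ^ (t₂ - p + j) * β₂ ^ (p - j)))) • F12 K
        + (((-1 : K) ^ j * (p.choose j : K)) *
          (β₁ ^ (t₁ - j) * β₂ ^ j * (α₁ ^ (t₂ - p + j) * α₂ ^ (p - j)))) • F23 K := by
    intro j hj
    rw [hz', hy₁', hy₂', pow_diag, pow_diag, pow_diag, pow_diag]
    have hmul : (α₁ ^ (t₁ - j) • Dm K + β₁ ^ (t₁ - j) • Em K) *
        (α₂ ^ j • Dm K + β₂ ^ j • Em K)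
        = (α₁ ^ (t₁ - j) * α₂ ^ j) • Dm K + (β₁ ^ (t₁ - j) * β₂ ^ j) • Em K := by
      ext i k
      fin_cases i <;> fin_cases k <;>
        simp [Dm, Em, Matrix.mul_apply, Fin.sum_univ_three, Matrix.vecHead, Matrix.vecTail] <;> ring
    have hmul2 : (α₁ ^ (t₂ - p + j) • Dm K + β₁ ^ (t₂ - p + j) • Em K) *
        (α₂ ^ (p - j) • Dm K + β₂ ^ (p - j) • Em K)
        = (α₁ ^ (t₂ - p + j) * α₂ ^ (p - j)) • Dm K + (β₁ ^ (t₂ - p + j) * β₂ ^ (p - j)) • Em K := by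
      ext i k
      fin_cases i <;> fin_cases k <;>
        simp [Dm, Em, Matrix.mul_apply, Fin.sum_univ_three, Matrix.vecHead, Matrix.vecTail] <;> ring
    have : (α₁ ^ (t₁ - j) • Dm K + β₁ ^ (t₁ - j) • Em K) * (α₂ ^ j • Dm K + β₂ ^ j • Em K) *
        (F12 K + F23 K) * (α₁ ^ (t₂ - p + j) • Dm K + β₁ ^ (t₂ - p + j) • Em K) *
        (α₂ ^ (p - j) • Dm K + β₂ ^ (p - j) • Em K)
        = (α₁ ^ (t₁ - j) * α₂ ^ j * (β₁ ^ (t₂ - p + j) * β₂ ^ (p - j))) • F12 K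
          + (β₁ ^ (t₁ - j) * β₂ ^ j * (α₁ ^ (t₂ - p + j) * α₂ ^ (p - j))) • F23 K := by
      rw [hmul, mul_assoc _ _ ((α₂ ^ (p - j)) • Dm K + (β₂ ^ (p - j)) • Em K), hmul2, key]
    rw [this, smul_add, smul_smul, smul_smul]
  rw [sum_congr rfl hterm, Finset.sum_add_distrib, ← Finset.sum_smul, ← Finset.sum_smul,
    scalar_id α₁ α₂ β₁ β₂ p t₁ t₂ ht₁ ht₂]
  rfl
end
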